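/- arXiv:2111.02927 — 2 statements merged into one kernel-verified Lean document; each statement's English description precedes it below -/
import Mathlib

section
/- Let all variables be discrete with positivity. A function q_a satisfies E[q_a(Z,A,X) | W, A=a', X] = p(W | A=a, X) / p(W | A=a', X) for all a' if and only if E[ I(A=a')/p(A=a'|X) · q_a(Z,A,X) − I(A=a)/p(A=a|X) | W, X ] = 0 for all a'. -/
open Finset
open scoped Classical

noncomputable section

/-- Probability of an event under weights `mu`. -/
def pr {O : Type} [Fintype O] (mu : O -> Real) (s : O -> Prop) : Real :=
  Finset.univ.sum (fun w => if s w then mu w else 0)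

/-- Conditional probability `P(s | t)`. -/
def cpr {O : Type} [Fintype O] (mu : O -> Real) (s t : O -> Prop) : Real :=
  pr mu (fun w => s w /\ t w) / pr mu t

/-- Expectation of `f`. -/
def expec {O : Type} [Fintype O] (mu : O -> Real) (f : O -> Real) : Real :=
  Finset.univ.sum (fun w => f w * mu w)

/-- Conditional expectation `E[f | t]`. -/
def cexp {O : Type} [Fintype O] (mu : O -> Real) (f : O -> Real) (t : O -> Prop) : Real :=
  (Finset.univ.sum (fun w => if t w then f w * mu w else 0)) / pr mu t

lemma pr_nonneg' {O : Type} [Fintype O] {mu : O -> Real} (hmu0 : ∀ o, 0 ≤ mu o) (s : O -> Prop) :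
    0 ≤ pr mu s := by
  apply Finset.sum_nonneg; intro o _; split_ifs <;> simp [hmu0 o]

lemma pr_mono' {O : Type} [Fintype O] {mu : O -> Real} (hmu0 : ∀ o, 0 ≤ mu o) {s t : O -> Prop}
    (h : ∀ o, s o → t o) : pr mu s ≤ pr mu t := by
  apply Finset.sum_le_sum; intro o _
  by_cases hs : s o
  · simp [hs, h o hs]
  · simp only [hs, if_false]; split_ifs <;> simp [hmu0 o]

lemma mu_zero' {O : Type} [Fintype O] {mu : O -> Real} (hmu0 : ∀ o, 0 ≤ mu o) {s : O -> Prop}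
    (h : pr mu s = 0) : ∀ o, s o → mu o = 0 := by
  intro o hs
  have := (Finset.sum_eq_zero_iff_of_nonneg
    (fun o _ => by split_ifs <;> simp [hmu0 o])).1 h o (Finset.mem_univ o)
  simpa [hs] using this

lemma alg' {S p1 p2 pa pa' px pwx : ℝ} (h1 : 0 < p1) (ha : 0 < pa) (ha' : 0 < pa')
    (hx : 0 < px) (hw : 0 < pwx) :
    (S / p1 = (p2 / pa) / (p1 / pa')) ↔ (((pa' / px)⁻¹ * S - (pa / px)⁻¹ * p2) / pwx = 0) := by
  rw [div_eq_zero_iff, or_iff_left hw.ne', sub_eq_zero]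
  constructor <;> intro h <;> field_simp at h ⊢ <;> nlinarith [h, mul_pos ha ha', mul_pos h1 hx]

theorem stmt3
    {O TA TM TZ TW TX : Type}
    [Fintype O] [Fintype TA] [Fintype TM] [Fintype TZ] [Fintype TW] [Fintype TX]
    [DecidableEq TA] [DecidableEq TM] [DecidableEq TZ] [DecidableEq TW] [DecidableEq TX]
    (mu : O -> Real) (hmu0 : forall o : O, 0 <= mu o)
    (hmu1 : Finset.univ.sum mu = 1)
    (A : O -> TA) (Y : O -> Real) (M : O -> TM) (Z : O -> TZ) (W : O -> TW) (X : O -> TX)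
    (a : TA) (q : TZ -> TA -> TX -> Real)
    (hpos : forall (v : TW) (t : TA) (x : TX), 0 < pr mu (fun o => X o = x) ->
      0 < pr mu (fun o => W o = v /\ A o = t /\ X o = x))
 :
    (forall (a' : TA) (v : TW) (x : TX),
      cexp mu (fun o => q (Z o) (A o) (X o)) (fun o => W o = v /\ A o = a' /\ X o = x) =
      cpr mu (fun o => W o = v) (fun o => A o = a /\ X o = x) /
        cpr mu (fun o => W o = v) (fun o => A o = a' /\ X o = x)) <->
    (forall (a' : TA) (v : TW) (x : TX),
      cexp mu (fun o =>
        (if A o = a' then (1 : Real) else 0) /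
            cpr mu (fun o' => A o' = a') (fun o' => X o' = X o) * q (Z o) (A o) (X o) -
        (if A o = a then (1 : Real) else 0) /
            cpr mu (fun o' => A o' = a) (fun o' => X o' = X o))
        (fun o => W o = v /\ X o = x) = 0) := by
  apply forall_congr'; intro a'
  apply forall_congr'; intro v
  apply forall_congr'; intro x
  by_cases hx : pr mu (fun o => X o = x) = 0
  · -- degenerate case: everything is 0
    have hz : ∀ o, X o = x → mu o = 0 := mu_zero' hmu0 hx
    have key : ∀ (g : O → ℝ) (t : O → Prop), (∀ o, t o → X o = x) → cexp mu g t = 0 := by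
      intro g t ht
      have : (Finset.univ.sum fun o => if t o then g o * mu o else 0) = 0 :=
        Finset.sum_eq_zero fun o _ => by
          split_ifs with h
          · rw [hz o (ht o h)]; ring
          · rfl
      unfold cexp; rw [this, zero_div]
    have keyp : ∀ (s t : O → Prop), (∀ o, t o → X o = x) → cpr mu s t = 0 := by
      intro s t ht; unfold cpr
      have : pr mu (fun o => s o ∧ t o) = 0 :=
        Finset.sum_eq_zero fun o _ => by
          split_ifs with h
          · exact hz o (ht o h.2)
          · rfl
      rw [this, zero_div]
    rw [key _ _ (fun o h => h.2.2), key _ _ (fun o h => h.2),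
      keyp _ _ (fun o h => h.2), zero_div]
  · have hx' : 0 < pr mu (fun o => X o = x) :=
      lt_of_le_of_ne (pr_nonneg' hmu0 _) (Ne.symm hx)
    have h1 : 0 < pr mu (fun o => W o = v ∧ A o = a' ∧ X o = x) := hpos v a' x hx'
    have h2 : 0 < pr mu (fun o => W o = v ∧ A o = a ∧ X o = x) := hpos v a x hx'
    have ha' : 0 < pr mu (fun o => A o = a' ∧ X o = x) :=
      lt_of_lt_of_le h1 (pr_mono' hmu0 fun o h => ⟨h.2.1, h.2.2⟩)
    have ha : 0 < pr mu (fun o => A o = a ∧ X o = x) :=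
      lt_of_lt_of_le h2 (pr_mono' hmu0 fun o h => ⟨h.2.1, h.2.2⟩)
    have hw : 0 < pr mu (fun o => W o = v ∧ X o = x) :=
      lt_of_lt_of_le h1 (pr_mono' hmu0 fun o h => ⟨h.1, h.2.2⟩)
    have hN : (Finset.univ.sum fun o => if W o = v ∧ X o = x then
        ((if A o = a' then (1 : Real) else 0) /
            cpr mu (fun o' => A o' = a') (fun o' => X o' = X o) * q (Z o) (A o) (X o) -
          (if A o = a then (1 : Real) else 0) /
            cpr mu (fun o' => A o' = a) (fun o' => X o' = X o)) * mu o else 0) =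
        (cpr mu (fun o' => A o' = a') (fun o' => X o' = x))⁻¹ *
          (Finset.univ.sum fun o => if W o = v ∧ A o = a' ∧ X o = x then
            q (Z o) (A o) (X o) * mu o else 0) -
        (cpr mu (fun o' => A o' = a) (fun o' => X o' = x))⁻¹ *
          pr mu (fun o => W o = v ∧ A o = a ∧ X o = x) := by
      simp only [pr]
      rw [Finset.mul_sum, Finset.mul_sum, ← Finset.sum_sub_distrib]
      apply Finset.sum_congr rfl
      intro o _
      by_cases hwx : W o = v ∧ X o = x
      · have hxo : X o = x := hwx.2
        simp only [hxo, if_pos hwx]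
        split_ifs <;> first | tauto | (field_simp; try ring)
      · rw [if_neg hwx, if_neg (fun h => hwx ⟨h.1, h.2.2⟩),
          if_neg (fun h => hwx ⟨h.1, h.2.2⟩)]
        simp
    simp only [cexp]
    rw [hN]
    simp only [cpr]
    exact alg' h1 ha ha' hx' hw
end
end

section
/- Let all variables be discrete. Suppose W ⊥ (A,Z) | (M,X), completeness of W for M: for all a,x, E[g(M) | W=w, A=a, X=x] = 0 for all w implies g(M)=0 a.s., and q_a satisfies E[q_a(Z,A,X) | W=w, A=a', X=x] = p(w | a, x)/p(w | a', x) for all w,x. Then for all m,x with p(m,a',x)>0: Σ_z q_a(z,a',x)· p(z | m, a', x) = p(m | a, x) / p(m | a', x). -/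
open Finset
open scoped Classical

noncomputable section

/- Auxiliary lemmas -/

lemma pr_congr {O : Type} [Fintype O] (mu : O -> Real) (s t : O -> Prop)
    (h : ∀ o, s o ↔ t o) : pr mu s = pr mu t := by
  unfold pr
  exact Finset.sum_congr rfl fun o _ => by simp only [h o]

lemma pr_split {O T : Type} [Fintype O] [Fintype T] [DecidableEq T]
    (mu : O -> Real) (V : O -> T) (s : O -> Prop) :
    pr mu s = ∑ v, pr mu (fun o => V o = v ∧ s o) := by
  unfold pr
  rw [Finset.sum_comm]
  refine Finset.sum_congr rfl fun o _ => ?_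
  by_cases hs : s o <;> simp [hs]

lemma csum_split {O T : Type} [Fintype O] [Fintype T]
    (mu f : O -> Real) (V : O -> T) (s : O -> Prop) :
    (∑ o, if s o then f o * mu o else 0)
      = ∑ v, ∑ o, @ite _ (V o = v ∧ s o) (Classical.propDecidable _) (f o * mu o) 0 := by
  rw [Finset.sum_comm]
  refine Finset.sum_congr rfl fun o _ => ?_
  by_cases hs : s o <;> simp [hs]

lemma csum_const {O : Type} [Fintype O] (mu f : O -> Real) (s : O -> Prop) (c : Real)
    (h : ∀ o, s o → f o = c) :
    (∑ o, if s o then f o * mu o else 0) = c * pr mu s := by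
  unfold pr
  rw [Finset.mul_sum]
  refine Finset.sum_congr rfl fun o _ => ?_
  by_cases hs : s o
  · simp [hs, h o hs]
  · simp [hs]

theorem stmt4
    {O TA TM TZ TW TX : Type}
    [Fintype O] [Fintype TA] [Fintype TM] [Fintype TZ] [Fintype TW] [Fintype TX]
    [DecidableEq TA] [DecidableEq TM] [DecidableEq TZ] [DecidableEq TW] [DecidableEq TX]
    (mu : O -> Real) (hmu0 : forall o : O, 0 <= mu o)
    (hmu1 : Finset.univ.sum mu = 1)
    (A : O -> TA) (Y : O -> Real) (M : O -> TM) (Z : O -> TZ) (W : O -> TW) (X : O -> TX)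
    (a a' : TA) (q : TZ -> TA -> TX -> Real)
    (hWA : forall (v : TW) (t : TA) (z : TZ) (m : TM) (x : TX),
      pr mu (fun o => W o = v /\ A o = t /\ Z o = z /\ M o = m /\ X o = x) *
        pr mu (fun o => M o = m /\ X o = x) =
      pr mu (fun o => W o = v /\ M o = m /\ X o = x) *
        pr mu (fun o => A o = t /\ Z o = z /\ M o = m /\ X o = x))
    (hcomp : forall (g : TM -> Real) (t : TA) (x : TX),
      (forall v : TW, cexp mu (fun o => g (M o)) (fun o => W o = v /\ A o = t /\ X o = x) = 0) ->
      forall m : TM, 0 < pr mu (fun o => M o = m /\ A o = t /\ X o = x) -> g m = 0)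
    (hpos : forall (m : TM) (v : TW) (z : TZ) (t : TA) (x : TX),
      0 < pr mu (fun o => M o = m /\ W o = v /\ Z o = z /\ A o = t /\ X o = x))
    (hq : forall (v : TW) (x : TX),
      cexp mu (fun o => q (Z o) (A o) (X o)) (fun o => W o = v /\ A o = a' /\ X o = x) =
      cpr mu (fun o => W o = v) (fun o => A o = a /\ X o = x) /
        cpr mu (fun o => W o = v) (fun o => A o = a' /\ X o = x)) :
    forall (m : TM) (x : TX), 0 < pr mu (fun o => M o = m /\ A o = a' /\ X o = x) ->
      Finset.univ.sum (fun z : TZ =>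
        q z a' x * cpr mu (fun o => Z o = z) (fun o => M o = m /\ A o = a' /\ X o = x)) =
      cpr mu (fun o => M o = m) (fun o => A o = a /\ X o = x) /
        cpr mu (fun o => M o = m) (fun o => A o = a' /\ X o = x) := by
  intro m x hm
  -- O is nonempty
  have hO : Nonempty O := by
    by_contra h
    rw [not_nonempty_iff] at h
    simp [pr, Finset.univ_eq_empty] at hm
  obtain ⟨o0⟩ := hO
  have hTW : (Finset.univ : Finset TW).Nonempty := ⟨W o0, Finset.mem_univ _⟩
  have hTA : (Finset.univ : Finset TA).Nonempty := ⟨A o0, Finset.mem_univ _⟩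
  have hTZ : (Finset.univ : Finset TZ).Nonempty := ⟨Z o0, Finset.mem_univ _⟩
  have hTM : (Finset.univ : Finset TM).Nonempty := ⟨M o0, Finset.mem_univ _⟩
  -- joint probabilities at the fixed x
  set J : TW -> TA -> TZ -> TM -> Real := fun v t z mm =>
    pr mu (fun o => W o = v ∧ A o = t ∧ Z o = z ∧ M o = mm ∧ X o = x) with hJ
  have hJpos : ∀ v t z mm, 0 < J v t z mm := by
    intro v t z mm
    have h := hpos mm v z t x
    have he : pr mu (fun o => M o = mm ∧ W o = v ∧ Z o = z ∧ A o = t ∧ X o = x)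
        = J v t z mm := pr_congr mu _ _ (fun o => by tauto)
    rw [he] at h; exact h
  set N2 : TA -> TM -> Real := fun t mm => ∑ v, ∑ z, J v t z mm with hN2
  set N3 : TM -> Real := fun mm => ∑ v, ∑ t, ∑ z, J v t z mm with hN3
  set Wm : TW -> TM -> Real := fun v mm => ∑ t, ∑ z, J v t z mm with hWm
  set AZ : TA -> TZ -> TM -> Real := fun t z mm => ∑ v, J v t z mm with hAZ
  set WA : TW -> TA -> Real := fun v t => ∑ z, ∑ mm, J v t z mm with hWAd
  set Att : TA -> Real := fun t => ∑ v, ∑ z, ∑ mm, J v t z mm with hAtt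
  set WAM : TW -> TA -> TM -> Real := fun v t mm => ∑ z, J v t z mm with hWAMd
  -- positivity
  have hN2pos : ∀ t mm, 0 < N2 t mm := fun t mm =>
    Finset.sum_pos (fun v _ => Finset.sum_pos (fun z _ => hJpos v t z mm) hTZ) hTW
  have hN3pos : ∀ mm, 0 < N3 mm := fun mm =>
    Finset.sum_pos (fun v _ => Finset.sum_pos (fun t _ =>
      Finset.sum_pos (fun z _ => hJpos v t z mm) hTZ) hTA) hTW
  have hWApos : ∀ v t, 0 < WA v t := fun v t =>
    Finset.sum_pos (fun z _ => Finset.sum_pos (fun mm _ => hJpos v t z mm) hTM) hTZ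
  have hAttpos : ∀ t, 0 < Att t := fun t =>
    Finset.sum_pos (fun v _ => Finset.sum_pos (fun z _ =>
      Finset.sum_pos (fun mm _ => hJpos v t z mm) hTM) hTZ) hTW
  -- pr expansions
  have hprN3 : ∀ mm, pr mu (fun o => M o = mm ∧ X o = x) = N3 mm := by
    intro mm
    rw [pr_split mu W]
    refine Finset.sum_congr rfl fun v _ => ?_
    rw [pr_split mu A]
    refine Finset.sum_congr rfl fun t _ => ?_
    rw [pr_split mu Z]
    refine Finset.sum_congr rfl fun z _ => ?_
    exact pr_congr mu _ _ (fun o => by tauto)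
  have hprWm : ∀ v mm, pr mu (fun o => W o = v ∧ M o = mm ∧ X o = x) = Wm v mm := by
    intro v mm
    rw [pr_split mu A]
    refine Finset.sum_congr rfl fun t _ => ?_
    rw [pr_split mu Z]
    refine Finset.sum_congr rfl fun z _ => ?_
    exact pr_congr mu _ _ (fun o => by tauto)
  have hprAZ : ∀ t z mm, pr mu (fun o => A o = t ∧ Z o = z ∧ M o = mm ∧ X o = x)
      = AZ t z mm := by
    intro t z mm
    rw [pr_split mu W]
  have hprZMA : ∀ t z mm, pr mu (fun o => Z o = z ∧ M o = mm ∧ A o = t ∧ X o = x)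
      = AZ t z mm := by
    intro t z mm
    rw [pr_congr mu _ _ (fun o => by tauto : ∀ o, (Z o = z ∧ M o = mm ∧ A o = t ∧ X o = x)
      ↔ (A o = t ∧ Z o = z ∧ M o = mm ∧ X o = x))]
    exact hprAZ t z mm
  have hprN2 : ∀ t mm, pr mu (fun o => M o = mm ∧ A o = t ∧ X o = x) = N2 t mm := by
    intro t mm
    rw [pr_split mu W]
    refine Finset.sum_congr rfl fun v _ => ?_
    rw [pr_split mu Z]
    refine Finset.sum_congr rfl fun z _ => ?_
    exact pr_congr mu _ _ (fun o => by tauto)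
  have hprWA : ∀ v t, pr mu (fun o => W o = v ∧ A o = t ∧ X o = x) = WA v t := by
    intro v t
    rw [pr_split mu Z]
    refine Finset.sum_congr rfl fun z _ => ?_
    rw [pr_split mu M]
    refine Finset.sum_congr rfl fun mm _ => ?_
    exact pr_congr mu _ _ (fun o => by tauto)
  have hprAt : ∀ t, pr mu (fun o => A o = t ∧ X o = x) = Att t := by
    intro t
    rw [pr_split mu W]
    refine Finset.sum_congr rfl fun v _ => ?_
    rw [pr_split mu Z]
    refine Finset.sum_congr rfl fun z _ => ?_
    rw [pr_split mu M]
    refine Finset.sum_congr rfl fun mm _ => ?_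
    exact pr_congr mu _ _ (fun o => by tauto)
  have hprWAM : ∀ v t mm, pr mu (fun o => M o = mm ∧ W o = v ∧ A o = t ∧ X o = x)
      = WAM v t mm := by
    intro v t mm
    rw [pr_split mu Z]
    refine Finset.sum_congr rfl fun z _ => ?_
    exact pr_congr mu _ _ (fun o => by tauto)
  -- conditional independence in algebraic form
  have hWA' : ∀ v t z mm, J v t z mm * N3 mm = Wm v mm * AZ t z mm := by
    intro v t z mm
    have h := hWA v t z mm x
    rw [hprN3, hprWm, hprAZ] at h
    exact h
  -- F1 : summed version
  have hF1 : ∀ v t mm, WAM v t mm * N3 mm = Wm v mm * N2 t mm := by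
    intro v t mm
    calc WAM v t mm * N3 mm = ∑ z, J v t z mm * N3 mm := by
          rw [hWAMd]; exact Finset.sum_mul _ _ _
      _ = ∑ z, Wm v mm * AZ t z mm := Finset.sum_congr rfl fun z _ => hWA' v t z mm
      _ = Wm v mm * ∑ z, AZ t z mm := by rw [Finset.mul_sum]
      _ = Wm v mm * N2 t mm := by
          congr 1
          rw [hAZ, hN2]
          exact Finset.sum_comm
  -- the numerator of the bridge-function expectation
  have hnum : ∀ v, cexp mu (fun o => q (Z o) (A o) (X o))
        (fun o => W o = v ∧ A o = a' ∧ X o = x)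
      = (∑ z, ∑ mm, q z a' x * J v a' z mm) / WA v a' := by
    intro v
    unfold cexp
    rw [hprWA v a']
    congr 1
    rw [csum_split mu (fun o => q (Z o) (A o) (X o)) Z]
    refine Finset.sum_congr rfl fun z _ => ?_
    rw [csum_split mu (fun o => q (Z o) (A o) (X o)) M]
    refine Finset.sum_congr rfl fun mm _ => ?_
    rw [csum_const mu (fun o => q (Z o) (A o) (X o)) _ (q z a' x)
      (fun o ho => by show q (Z o) (A o) (X o) = q z a' x; rw [ho.2.1, ho.2.2.2.1, ho.2.2.2.2])]
    congr 1
    exact pr_congr mu _ _ (fun o => by tauto)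
  -- translated q-bridge equation
  have hq2 : ∀ v, ∑ z, ∑ mm, q z a' x * J v a' z mm = WA v a * Att a' / Att a := by
    intro v
    have h := hq v x
    rw [hnum v] at h
    simp only [cpr] at h
    rw [hprWA v a, hprWA v a', hprAt a, hprAt a'] at h
    have hr : (WA v a / Att a) / (WA v a' / Att a')
        = WA v a * Att a' / (Att a * WA v a') := by
      field_simp
    rw [hr] at h
    rw [div_eq_div_iff (hWApos v a').ne' (mul_pos (hAttpos a) (hWApos v a')).ne'] at h
    rw [eq_div_iff (hAttpos a).ne']
    apply mul_right_cancel₀ (hWApos v a').ne'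
    calc (∑ z, ∑ mm, q z a' x * J v a' z mm) * Att a * WA v a'
        = (∑ z, ∑ mm, q z a' x * J v a' z mm) * (Att a * WA v a') := by ring
      _ = WA v a * Att a' * WA v a' := h
  -- the function to which completeness is applied
  set g : TM -> Real := fun mm =>
    (∑ z, q z a' x * AZ a' z mm) / N2 a' mm
      - N2 a mm * Att a' / (N2 a' mm * Att a) with hg
  -- key pointwise identity
  have hpart : ∀ v mm, g mm * WAM v a' mm
      = (∑ z, q z a' x * J v a' z mm) - Att a' / Att a * WAM v a mm := by
    intro v mm
    have hN3ne := (hN3pos mm).ne'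
    have hN2ne := (hN2pos a' mm).ne'
    have hAtane := (hAttpos a).ne'
    have h1 : WAM v a' mm = Wm v mm * N2 a' mm / N3 mm := by
      rw [eq_div_iff hN3ne]; exact hF1 v a' mm
    have h2 : WAM v a mm = Wm v mm * N2 a mm / N3 mm := by
      rw [eq_div_iff hN3ne]; exact hF1 v a mm
    have h3 : ∑ z, q z a' x * J v a' z mm
        = (∑ z, q z a' x * AZ a' z mm) * Wm v mm / N3 mm := by
      rw [eq_div_iff hN3ne, Finset.sum_mul, Finset.sum_mul]
      refine Finset.sum_congr rfl fun z _ => ?_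
      have hh := hWA' v a' z mm
      linear_combination q z a' x * hh
    rw [hg, h1, h2, h3]
    field_simp
  -- the conditional expectation of g is zero
  have hsum : ∀ v, ∑ mm, g mm * WAM v a' mm = 0 := by
    intro v
    have hstep : ∑ mm, g mm * WAM v a' mm
        = (∑ mm, ∑ z, q z a' x * J v a' z mm)
          - Att a' / Att a * ∑ mm, WAM v a mm := by
      rw [Finset.mul_sum, ← Finset.sum_sub_distrib]
      exact Finset.sum_congr rfl fun mm _ => hpart v mm
    rw [hstep]
    have e1 : ∑ mm, ∑ z, q z a' x * J v a' z mm
        = ∑ z, ∑ mm, q z a' x * J v a' z mm := Finset.sum_comm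
    have e2 : (∑ mm, WAM v a mm) = WA v a := by
      rw [hWAMd, hWAd]; exact Finset.sum_comm
    rw [e1, hq2 v, e2]
    ring
  have hceq : ∀ v, cexp mu (fun o => g (M o))
      (fun o => W o = v ∧ A o = a' ∧ X o = x) = 0 := by
    intro v
    have hn : cexp mu (fun o => g (M o)) (fun o => W o = v ∧ A o = a' ∧ X o = x)
        = (∑ mm, g mm * WAM v a' mm) / WA v a' := by
      unfold cexp
      rw [hprWA v a']
      congr 1
      rw [csum_split mu (fun o => g (M o)) M]
      refine Finset.sum_congr rfl fun mm _ => ?_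
      rw [csum_const mu (fun o => g (M o)) _ (g mm) (fun o ho => by show g (M o) = g mm; rw [ho.1])]
      congr 1
      exact hprWAM v a' mm
    rw [hn, hsum v, zero_div]
  have hgm : g m = 0 := hcomp g a' x hceq m hm
  -- finish
  have hN2a'ne := (hN2pos a' m).ne'
  have hAtane := (hAttpos a).ne'
  have hAta'ne := (hAttpos a').ne'
  have hgoalL : (∑ z, q z a' x * cpr mu (fun o => Z o = z)
        (fun o => M o = m ∧ A o = a' ∧ X o = x))
      = (∑ z, q z a' x * AZ a' z m) / N2 a' m := by
    rw [Finset.sum_div]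
    refine Finset.sum_congr rfl fun z _ => ?_
    unfold cpr
    rw [hprZMA a' z m, hprN2 a' m, mul_div_assoc]
  have hgoalR : cpr mu (fun o => M o = m) (fun o => A o = a ∧ X o = x) /
        cpr mu (fun o => M o = m) (fun o => A o = a' ∧ X o = x)
      = N2 a m * Att a' / (N2 a' m * Att a) := by
    unfold cpr
    rw [hprN2 a m, hprN2 a' m, hprAt a, hprAt a']
    rw [div_div_eq_mul_div, div_mul_eq_mul_div, div_div, mul_comm (Att a) (N2 a' m)]
  rw [hgoalL, hgoalR]
  rw [hg] at hgm
  linarith [hgm]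
end
end
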